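/- arXiv:1401.5214 — 3 statements merged into one kernel-verified Lean document; each statement's English description precedes it below -/
import Mathlib

section
/- There is no constant C such that for all (x, y) in the punctured unit ball of ℂ² (with z = x + y and xyz ≠ 0), |xyz|·(|x|² + |y|² + |z|²)^{1/4} ≤ C·|xyz|^{4/3}; equivalently, the function (x,y) ↦ |xyz|·(|x|²+|y|²+|z|²)^{1/4} / |xyz|^{4/3} is not bounded above near the origin. -/
/-!
Along the diagonal `x = y = r > 0` the left side is `2 r³ (6 r²)^{1/4} = 2·6^{1/4} r^{7/2}`,
while `|xyz|^{4/3} = 2^{4/3} r⁴`. A bound by `C r⁴` would force `2·6^{1/4} ≤ 2^{4/3} C √r`,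
which fails as `r → 0⁺`.
-/

open Filter Topology

lemma norm_mul_self_mul_add_self (x : ℂ) : ‖x * x * (x + x)‖ = 2 * ‖x‖ ^ 3 := by
  rw [← two_mul x, norm_mul, norm_mul, norm_mul, Complex.norm_two]
  ring

lemma norm_sq_add_norm_sq_add_norm_add_self_sq (x : ℂ) :
    ‖x‖ ^ 2 + ‖x‖ ^ 2 + ‖x + x‖ ^ 2 = 6 * ‖x‖ ^ 2 := by
  rw [← two_mul x, norm_mul, Complex.norm_two]
  ring

lemma le_mul_sqrt_of_diagonal_bound {r C : ℝ} (hr : 0 < r)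
    (h : 2 * r ^ 3 * (6 * r ^ 2) ^ ((1 : ℝ) / 4) ≤ C * (2 * r ^ 3) ^ ((4 : ℝ) / 3)) :
    2 * (6 : ℝ) ^ ((1 : ℝ) / 4) ≤ (2 : ℝ) ^ ((4 : ℝ) / 3) * C * √r := by
  have hquarter : (6 * r ^ 2) ^ ((1 : ℝ) / 4) = (6 : ℝ) ^ ((1 : ℝ) / 4) * √r := by
    rw [Real.mul_rpow (by norm_num) (by positivity), Real.sqrt_eq_rpow,
      ← Real.rpow_natCast, ← Real.rpow_mul hr.le]
    norm_num
  have hfourThirds :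
      (2 * r ^ 3) ^ ((4 : ℝ) / 3) = (2 : ℝ) ^ ((4 : ℝ) / 3) * (r ^ 3 * √r * √r) := by
    rw [Real.mul_rpow (by norm_num) (by positivity), mul_assoc _ √r, Real.mul_self_sqrt hr.le,
      ← Real.rpow_natCast, ← Real.rpow_mul hr.le]
    norm_num
    ring
  rw [hquarter, hfourThirds] at h
  have hpos : 0 < r ^ 3 * √r := by positivity
  refine le_of_mul_le_mul_right ?_ hpos
  linarith

theorem stmt6 :
    ¬ ∃ C : ℝ, ∀ x y : ℂ,
      ‖x‖ ^ 2 + ‖y‖ ^ 2 < 1 →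
      x * y * (x + y) ≠ 0 →
      ‖(x * y * (x + y))‖ *
          (‖x‖ ^ 2 + ‖y‖ ^ 2 + ‖(x + y)‖ ^ 2) ^ ((1 : ℝ) / 4)
        ≤ C * ‖(x * y * (x + y))‖ ^ ((4 : ℝ) / 3) := by
  rintro ⟨C, hC⟩
  have hsqrt : Tendsto (fun r : ℝ => (2 : ℝ) ^ ((4 : ℝ) / 3) * C * √r) (𝓝[>] 0) (𝓝 0) := by
    have hcont : Continuous fun r : ℝ => (2 : ℝ) ^ ((4 : ℝ) / 3) * C * √r := by fun_prop
    simpa using (hcont.tendsto 0).mono_left nhdsWithin_le_nhds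
  have hsq : Tendsto (fun r : ℝ => 2 * r ^ 2) (𝓝[>] 0) (𝓝 0) := by
    have hcont : Continuous fun r : ℝ => 2 * r ^ 2 := by fun_prop
    simpa using (hcont.tendsto 0).mono_left nhdsWithin_le_nhds
  obtain ⟨r, hsmall, hball, hr⟩ :=
    ((hsqrt.eventually_lt_const (show (0 : ℝ) < 2 * 6 ^ ((1 : ℝ) / 4) by positivity)).and
      ((hsq.eventually_lt_const one_pos).and self_mem_nhdsWithin)).exists
  have hnorm : ‖(r : ℂ)‖ = r := Complex.norm_of_nonneg hr.le
  have hne : (r : ℂ) * r * (r + r) ≠ 0 :=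
    norm_ne_zero_iff.mp (by rw [norm_mul_self_mul_add_self, hnorm]; positivity)
  have hbound := hC r r (by rw [hnorm]; linarith) hne
  rw [norm_mul_self_mul_add_self, norm_sq_add_norm_sq_add_norm_add_self_sq, hnorm] at hbound
  exact (le_mul_sqrt_of_diagonal_bound hr hbound).not_gt hsmall
end

section
/- Along the curve x = y (so z = 2x), the quotient |x·y·z|·(|x|² + |y|² + |z|²)^{1/4} / |x·y·z|^{4/3} equals c·|x|^{−1/2} for a positive constant c = 2^{−1/3}·6^{1/4}, and hence tends to +∞ as x → 0. -/
/-! On the line y = x, z = 2x every norm is a power of ‖x‖: the numerator is homogeneous of degree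
3 + 1/2 and the denominator of degree 4, so the quotient is a constant times ‖x‖^(-1/2). -/

open Real Filter Topology

lemma mul_pow_rpow {c a : ℝ} (hc : 0 ≤ c) (ha : 0 ≤ a) (n : ℕ) (p : ℝ) :
    (c * a ^ n) ^ p = c ^ p * a ^ (n * p) := by
  rw [mul_rpow hc (by positivity), rpow_natCast_mul ha]

lemma diagonal_quotient_eq {a : ℝ} (ha : 0 < a) :
    2 * a ^ 3 * (6 * a ^ 2) ^ (1 / 4 : ℝ) / (2 * a ^ 3) ^ (4 / 3 : ℝ)
      = 2 ^ (-1 / 3 : ℝ) * 6 ^ (1 / 4 : ℝ) * a ^ (-1 / 2 : ℝ) := by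
  rw [mul_pow_rpow (by norm_num) ha.le, mul_pow_rpow (by norm_num) ha.le,
    show (-1 / 3 : ℝ) = 1 - 4 / 3 by norm_num,
    show (-1 / 2 : ℝ) = 3 + 2 * (1 / 4) - 3 * (4 / 3) by norm_num,
    rpow_sub two_pos, rpow_sub ha, rpow_add ha, rpow_one]
  norm_cast
  field_simp

lemma norm_diagonal_quotient_eq {𝕜 : Type*} [RCLike 𝕜] {x : 𝕜} (hx : x ≠ 0) :
    ‖x * x * (2 * x)‖ * (‖x‖ ^ 2 + ‖x‖ ^ 2 + ‖2 * x‖ ^ 2) ^ (1 / 4 : ℝ)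
        / ‖x * x * (2 * x)‖ ^ (4 / 3 : ℝ)
      = 2 ^ (-1 / 3 : ℝ) * 6 ^ (1 / 4 : ℝ) * ‖x‖ ^ (-1 / 2 : ℝ) := by
  have hxyz : ‖x * x * (2 * x)‖ = 2 * ‖x‖ ^ 3 := by
    rw [norm_mul, norm_mul, norm_mul, RCLike.norm_two]; ring
  have hsum : ‖x‖ ^ 2 + ‖x‖ ^ 2 + ‖2 * x‖ ^ 2 = 6 * ‖x‖ ^ 2 := by
    rw [norm_mul, RCLike.norm_two]; ring
  rw [hxyz, hsum, diagonal_quotient_eq (norm_pos_iff.mpr hx)]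

theorem stmt7 :
    (∀ x : ℂ, x ≠ 0 →
      ‖(x * x * (2 * x))‖ *
          (‖x‖ ^ 2 + ‖x‖ ^ 2 + ‖(2 * x)‖ ^ 2) ^ ((1 : ℝ) / 4) /
          ‖(x * x * (2 * x))‖ ^ ((4 : ℝ) / 3)
        = (2 : ℝ) ^ (-(1 : ℝ) / 3) * (6 : ℝ) ^ ((1 : ℝ) / 4) *
            ‖x‖ ^ (-(1 : ℝ) / 2)) ∧
    Filter.Tendsto
      (fun x : ℂ =>
        ‖(x * x * (2 * x))‖ *
            (‖x‖ ^ 2 + ‖x‖ ^ 2 + ‖(2 * x)‖ ^ 2) ^ ((1 : ℝ) / 4) /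
            ‖(x * x * (2 * x))‖ ^ ((4 : ℝ) / 3))
      (nhdsWithin 0 {0}ᶜ) Filter.atTop := by
  refine ⟨fun x hx => norm_diagonal_quotient_eq hx, ?_⟩
  have hpow : Tendsto (fun x : ℂ => ‖x‖ ^ (-1 / 2 : ℝ)) (𝓝[≠] 0) atTop :=
    (tendsto_rpow_neg_nhdsGT_zero (by norm_num)).comp tendsto_norm_nhdsNE_zero
  refine (hpow.const_mul_atTop
    (by positivity : (0 : ℝ) < 2 ^ (-1 / 3 : ℝ) * 6 ^ (1 / 4 : ℝ))).congr' ?_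
  filter_upwards [self_mem_nhdsWithin] with x hx
  exact (norm_diagonal_quotient_eq hx).symm
end

section
/- Define on ℂ² \ {(0,0)} the functions u(x,y) = (1/5)·log(|xy(x+y)|^{6}) and v(x,y) = (1/3)·log(|xy(x+y)|^{4}) (values −∞ where xy(x+y)=0, interpreted as extended reals). Then e^{u}/e^{v} = |xy(x+y)|^{6/5 − 4/3} = |xy(x+y)|^{−2/15} is not bounded above on any punctured neighborhood of the origin. -/
/-! On the diagonal `x = y = t` the product `x y (x + y)` equals `2 t³`, which tends to `0⁺` as
`t → 0⁺`, so its negative power `-2/15` tends to `+∞`. -/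

open Filter Topology

theorem Real.exp_mul_log_rpow_div_exp_mul_log_rpow {a : ℝ} (ha : 0 < a) (p q r s : ℝ) :
    Real.exp (p * Real.log (a ^ r)) / Real.exp (q * Real.log (a ^ s)) = a ^ (p * r - q * s) := by
  rw [Real.log_rpow ha, Real.log_rpow ha, ← Real.exp_sub, Real.rpow_def_of_pos ha]
  ring_nf

theorem norm_ofReal_mul_mul_add_self (t : ℝ) : ‖(t : ℂ) * t * (t + t)‖ = 2 * |t| ^ 3 := by
  rw [← two_mul, norm_mul, norm_mul, norm_mul, Complex.norm_real, Complex.norm_ofNat,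
    Real.norm_eq_abs]
  ring

theorem tendsto_norm_ofReal_mul_mul_add_self :
    Tendsto (fun t : ℝ => ‖(t : ℂ) * t * (t + t)‖) (𝓝[>] 0) (𝓝[>] 0) := by
  simp only [norm_ofReal_mul_mul_add_self]
  refine tendsto_nhdsWithin_iff.2 ⟨?_, ?_⟩
  · have : Continuous fun t : ℝ => 2 * |t| ^ 3 := by fun_prop
    simpa using this.continuousWithinAt.tendsto (s := Set.Ioi 0) (x := 0)
  · filter_upwards [self_mem_nhdsWithin] with t (ht : 0 < t)
    show 0 < 2 * |t| ^ 3
    positivity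

theorem stmt10 :
    (∀ x y : ℂ, x * y * (x + y) ≠ 0 →
      Real.exp ((1 / 5) * Real.log (‖x * y * (x + y)‖ ^ (6 : ℝ))) /
          Real.exp ((1 / 3) * Real.log (‖x * y * (x + y)‖ ^ (4 : ℝ)))
        = ‖x * y * (x + y)‖ ^ (-(2 : ℝ) / 15)) ∧
    ∀ ε : ℝ, 0 < ε → ∀ C : ℝ, ∃ x y : ℂ,
      (x, y) ≠ (0, 0) ∧ ‖x‖ < ε ∧ ‖y‖ < ε ∧
      x * y * (x + y) ≠ 0 ∧
      C < ‖x * y * (x + y)‖ ^ (-(2 : ℝ) / 15) := by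
  refine ⟨fun x y h => ?_, fun ε hε C => ?_⟩
  · rw [Real.exp_mul_log_rpow_div_exp_mul_log_rpow (norm_pos_iff.2 h)]
    norm_num
  · have h_unbounded := (tendsto_rpow_neg_nhdsGT_zero (by norm_num : -(2 : ℝ) / 15 < 0)).comp
      tendsto_norm_ofReal_mul_mul_add_self
    obtain ⟨t, ⟨ht0, htε⟩, hC⟩ :=
      (Eventually.and (Ioo_mem_nhdsGT hε) (h_unbounded.eventually_gt_atTop C)).exists
    have hne : (t : ℂ) * t * (t + t) ≠ 0 := by
      rw [← norm_ne_zero_iff, norm_ofReal_mul_mul_add_self]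
      positivity
    exact ⟨t, t, by simp [ht0.ne'], by simpa [abs_of_pos ht0], by simpa [abs_of_pos ht0], hne, hC⟩
end
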